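/- arXiv:2009.10044 — 6 statements merged into one kernel-verified Lean document; each statement's English description precedes it below -/
import Mathlib

section
/- The subgroup of SL(2,ℂ) generated by the three matrices a = [[i,0],[0,−i]], b = [[0,1],[−1,0]] and c = (1/2)·[[1+i, −1+i],[1+i, 1−i]] is isomorphic to SL(2, ℤ/3ℤ) (the binary tetrahedral group). In particular it has exactly 24 elements. -/
/-!
Identify `a`, `b`, `c` with the Hurwitz quaternions `i`, `j` and `u = (1 + i - j + k)/2` through
the standard representation `ℍ[ℝ] → M₂(ℂ)`. The 24 Hurwitz units form a group which reduction
modulo 3 maps isomorphically onto `SL(2, ℤ/3)`, because `ℍ[ℤ/3] ≅ M₂(ℤ/3)` and the units are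
pairwise incongruent mod 3. Inverting the reduction gives an injective homomorphism
`SL(2, ℤ/3) → SL(2, ℂ)` sending three generators of `SL(2, ℤ/3)` to `a`, `b`, `c`, so `⟨a, b, c⟩`
is its image.
-/

open Matrix Complex
open scoped Quaternion MatrixGroups

namespace Quaternion

instance {R : Type*} [CommRing R] [DecidableEq R] : DecidableEq ℍ[R] := fun x y =>
  decidable_of_iff (x.re = y.re ∧ x.imI = y.imI ∧ x.imJ = y.imJ ∧ x.imK = y.imK)
    Quaternion.ext_iff.symm

variable {R : Type*} [CommRing R] [Algebra R ℝ]

def complexMatrixBasis : QuaternionAlgebra.Basis (Matrix (Fin 2) (Fin 2) ℂ) (-1 : R) 0 (-1) where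
  i := !![I, 0; 0, -I]
  j := !![0, 1; -1, 0]
  k := !![0, I; I, 0]
  i_mul_i := by ext i j; fin_cases i <;> fin_cases j <;> simp
  j_mul_j := by ext i j; fin_cases i <;> fin_cases j <;> simp
  i_mul_j := by ext i j; fin_cases i <;> fin_cases j <;> simp
  j_mul_i := by ext i j; fin_cases i <;> fin_cases j <;> simp

def toComplexMatrix : ℍ[R] →ₐ[R] Matrix (Fin 2) (Fin 2) ℂ := complexMatrixBasis.liftHom

theorem toComplexMatrix_apply (q : ℍ[R]) :
    toComplexMatrix q =
      !![(algebraMap R ℝ q.re : ℂ) + algebraMap R ℝ q.imI * I,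
          (algebraMap R ℝ q.imJ : ℂ) + algebraMap R ℝ q.imK * I;
        -(algebraMap R ℝ q.imJ : ℂ) + algebraMap R ℝ q.imK * I,
          (algebraMap R ℝ q.re : ℂ) - algebraMap R ℝ q.imI * I] := by
  show QuaternionAlgebra.Basis.lift _ q = _
  simp only [QuaternionAlgebra.Basis.lift]
  ext i j
  fin_cases i <;> fin_cases j <;>
    simp [complexMatrixBasis, Algebra.smul_def, algebraMap_eq_diagonal,
      IsScalarTower.algebraMap_apply R ℝ ℂ, sub_eq_add_neg]

theorem det_toComplexMatrix (q : ℍ[R]) :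
    (toComplexMatrix q).det = (algebraMap R ℝ (normSq q) : ℂ) := by
  rw [toComplexMatrix_apply, det_fin_two_of, normSq_def']
  push_cast
  linear_combination (-(algebraMap R ℝ q.imI : ℂ) ^ 2 - (algebraMap R ℝ q.imK : ℂ) ^ 2) * I_sq

theorem toComplexMatrix_injective (h : Function.Injective (algebraMap R ℝ)) :
    Function.Injective (toComplexMatrix : ℍ[R] → Matrix (Fin 2) (Fin 2) ℂ) := by
  intro p q hpq
  have h00 := congrFun₂ hpq 0 0
  have h01 := congrFun₂ hpq 0 1
  simp [toComplexMatrix_apply, Complex.ext_iff] at h00 h01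
  exact QuaternionAlgebra.ext (h h00.1) (h h00.2) (h h01.1) (h h01.2)

end Quaternion

namespace SL2ZMod3

open Quaternion

def reductionBasis :
    QuaternionAlgebra.Basis (Matrix (Fin 2) (Fin 2) (ZMod 3)) (-1 : ℤ) 0 (-1) where
  i := !![0, -1; 1, 0]
  j := !![1, 1; 1, -1]
  k := !![-1, 1; 1, 1]
  i_mul_i := by decide
  j_mul_j := by decide
  i_mul_j := by decide
  j_mul_i := by decide

def reduceModThree : ℍ[ℤ] →ₐ[ℤ] Matrix (Fin 2) (Fin 2) (ZMod 3) := reductionBasis.liftHom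

/-- `2u` for the Hurwitz unit `u ≡ x + y i + z j + w k (mod 3)`. As `2 ≡ -1 (mod 3)`, the
coordinates of `2u` lift `-x, -y, -z, -w` to `±1` when `u = (±1 ± i ± j ± k)/2`, and to `0, ±2`
when `u` is one of `±1, ±i, ±j, ±k`. -/
def twiceHurwitzLift (x y z w : ZMod 3) : ℍ[ℤ] :=
  if x ≠ 0 ∧ y ≠ 0 ∧ z ≠ 0 ∧ w ≠ 0 then
    ⟨-x.valMinAbs, -y.valMinAbs, -z.valMinAbs, -w.valMinAbs⟩
  else ⟨2 * x.valMinAbs, 2 * y.valMinAbs, 2 * z.valMinAbs, 2 * w.valMinAbs⟩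

/-- The four arguments are the coordinates of `A` in the basis `1, i, j, k` of `reductionBasis`. -/
def hurwitzLift (A : SL(2, ZMod 3)) : ℍ[ℤ] :=
  twiceHurwitzLift (-(A 0 0 + A 1 1)) (A 0 1 - A 1 0) (A 0 0 - A 1 1 + A 0 1 + A 1 0)
    (A 1 1 - A 0 0 + A 0 1 + A 1 0)

theorem reduceModThree_hurwitzLift :
    ∀ A : SL(2, ZMod 3),
      reduceModThree (hurwitzLift A) = (2 : ZMod 3) • (A : Matrix (Fin 2) (Fin 2) (ZMod 3)) := by
  decide

theorem normSq_hurwitzLift : ∀ A : SL(2, ZMod 3), normSq (hurwitzLift A) = 4 := by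
  decide

theorem hurwitzLift_mul :
    ∀ A B : SL(2, ZMod 3), hurwitzLift A * hurwitzLift B = 2 * hurwitzLift (A * B) := by
  decide

theorem hurwitzLift_injective : Function.Injective hurwitzLift := by
  intro A B h
  have h2 := reduceModThree_hurwitzLift A
  rw [h, reduceModThree_hurwitzLift B] at h2
  exact Subtype.ext ((smul_right_inj (by decide : (2 : ZMod 3) ≠ 0)).1 h2).symm

noncomputable def toSL2Complex : SL(2, ZMod 3) →* SL(2, ℂ) :=
  MonoidHom.mk'
    (fun A => ⟨(1 / 2 : ℂ) • toComplexMatrix (hurwitzLift A), by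
      rw [det_smul, det_toComplexMatrix, normSq_hurwitzLift]
      norm_num⟩)
    (fun A B => Subtype.ext <| by
      change (1 / 2 : ℂ) • toComplexMatrix (hurwitzLift (A * B)) =
        (1 / 2 : ℂ) • toComplexMatrix (hurwitzLift A) *
          ((1 / 2 : ℂ) • toComplexMatrix (hurwitzLift B))
      rw [smul_mul_smul_comm, ← map_mul, hurwitzLift_mul, map_mul, map_ofNat, two_mul, smul_add,
        ← add_smul]
      norm_num)

theorem coe_toSL2Complex (A : SL(2, ZMod 3)) :
    (toSL2Complex A : Matrix (Fin 2) (Fin 2) ℂ) = (1 / 2 : ℂ) • toComplexMatrix (hurwitzLift A) :=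
  rfl

theorem toSL2Complex_injective : Function.Injective toSL2Complex := by
  intro A B h
  refine hurwitzLift_injective (toComplexMatrix_injective (algebraMap ℤ ℝ).injective_int ?_)
  have h' := congrArg (fun M : SL(2, ℂ) => (2 : ℂ) • (M : Matrix (Fin 2) (Fin 2) ℂ)) h
  simpa [coe_toSL2Complex, smul_smul] using h'

def a₃ : SL(2, ZMod 3) := ⟨!![0, -1; 1, 0], by decide⟩
def b₃ : SL(2, ZMod 3) := ⟨!![1, 1; 1, -1], by decide⟩
def c₃ : SL(2, ZMod 3) := ⟨!![1, 1; -1, 0], by decide⟩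

theorem exists_eq_prod_generators : ∀ x : SL(2, ZMod 3), ∃ i j k l : Fin 4,
    x = ![1, a₃, b₃, c₃] i * ![1, a₃, b₃, c₃] j * ![1, a₃, b₃, c₃] k * ![1, a₃, b₃, c₃] l := by
  decide

theorem closure_a₃_b₃_c₃ : Subgroup.closure {a₃, b₃, c₃} = ⊤ := by
  refine eq_top_iff.2 fun x _ => ?_
  obtain ⟨i, j, k, l, rfl⟩ := exists_eq_prod_generators x
  have hmem : ∀ i, ![1, a₃, b₃, c₃] i ∈ Subgroup.closure {a₃, b₃, c₃} := by
    intro i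
    fin_cases i <;> simp <;> exact Subgroup.subset_closure (by simp)
  exact mul_mem (mul_mem (mul_mem (hmem i) (hmem j)) (hmem k)) (hmem l)

theorem natCard_eq : Nat.card SL(2, ZMod 3) = 24 := by
  rw [Nat.card_eq_fintype_card]
  decide

theorem hurwitzLift_a₃ : hurwitzLift a₃ = ⟨0, 2, 0, 0⟩ := rfl

theorem hurwitzLift_b₃ : hurwitzLift b₃ = ⟨0, 0, 2, 0⟩ := rfl

theorem hurwitzLift_c₃ : hurwitzLift c₃ = ⟨1, 1, -1, 1⟩ := rfl

theorem coe_toSL2Complex_a₃ : (toSL2Complex a₃ : Matrix (Fin 2) (Fin 2) ℂ) = !![I, 0; 0, -I] := by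
  rw [coe_toSL2Complex, toComplexMatrix_apply, hurwitzLift_a₃]
  ext i j
  fin_cases i <;> fin_cases j <;> simp

theorem coe_toSL2Complex_b₃ : (toSL2Complex b₃ : Matrix (Fin 2) (Fin 2) ℂ) = !![0, 1; -1, 0] := by
  rw [coe_toSL2Complex, toComplexMatrix_apply, hurwitzLift_b₃]
  ext i j
  fin_cases i <;> fin_cases j <;> simp

theorem coe_toSL2Complex_c₃ : (toSL2Complex c₃ : Matrix (Fin 2) (Fin 2) ℂ) =
    (1 / 2 : ℂ) • !![1 + I, -1 + I; 1 + I, 1 - I] := by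
  rw [coe_toSL2Complex, toComplexMatrix_apply, hurwitzLift_c₃]
  ext i j
  fin_cases i <;> fin_cases j <;> simp

end SL2ZMod3

open SL2ZMod3

/-- The subgroup of `SL(2,ℂ)` generated by `a = [[i,0],[0,-i]]`, `b = [[0,1],[-1,0]]` and
`c = (1/2)·[[1+i, -1+i],[1+i, 1-i]]` is isomorphic to `SL(2, ℤ/3)` (the binary tetrahedral
group); in particular it has exactly 24 elements. -/
theorem stmt_6 (a b c : Matrix.SpecialLinearGroup (Fin 2) ℂ)
    (ha : (a : Matrix (Fin 2) (Fin 2) ℂ) = !![Complex.I, 0; 0, -Complex.I])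
    (hb : (b : Matrix (Fin 2) (Fin 2) ℂ) = !![0, 1; -1, 0])
    (hc : (c : Matrix (Fin 2) (Fin 2) ℂ) =
      (1 / 2 : ℂ) • !![1 + Complex.I, -1 + Complex.I; 1 + Complex.I, 1 - Complex.I]) :
    Nonempty ((Subgroup.closure {a, b, c} : Subgroup (Matrix.SpecialLinearGroup (Fin 2) ℂ))
        ≃* Matrix.SpecialLinearGroup (Fin 2) (ZMod 3)) ∧
      Nat.card
        (Subgroup.closure {a, b, c} : Subgroup (Matrix.SpecialLinearGroup (Fin 2) ℂ)) = 24 := by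
  have hgen : toSL2Complex '' {a₃, b₃, c₃} = {a, b, c} := by
    rw [Set.image_insert_eq, Set.image_insert_eq, Set.image_singleton,
      Subtype.ext (coe_toSL2Complex_a₃.trans ha.symm),
      Subtype.ext (coe_toSL2Complex_b₃.trans hb.symm),
      Subtype.ext (coe_toSL2Complex_c₃.trans hc.symm)]
  have hrange : toSL2Complex.range = Subgroup.closure {a, b, c} := by
    rw [MonoidHom.range_eq_map, ← closure_a₃_b₃_c₃, MonoidHom.map_closure, hgen]
  let e := (MulEquiv.subgroupCongr hrange).symm.trans
    (MonoidHom.ofInjective toSL2Complex_injective).symm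
  exact ⟨⟨e⟩, by rw [Nat.card_congr e.toEquiv, natCard_eq]⟩
end

section
/- The group presented by three generators x, y, z subject to the relations x² = y², y² = (y·x)², x² = z³, x·z·y = z, and x·y·z = z·x is isomorphic to SL(2, ℤ/3ℤ), the binary tetrahedral group of order 24. -/
/-- The generators `x`, `y`, `z` of the free group on three letters. -/
def xgen : FreeGroup (Fin 3) := FreeGroup.of 0
def ygen : FreeGroup (Fin 3) := FreeGroup.of 1
def zgen : FreeGroup (Fin 3) := FreeGroup.of 2

/-- The relations `x² = y²`, `y² = (yx)²`, `x² = z³`, `xzy = z`, `xyz = zx`. -/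
def btRels : Set (FreeGroup (Fin 3)) :=
  { xgen ^ 2 * (ygen ^ 2)⁻¹,
    ygen ^ 2 * ((ygen * xgen) ^ 2)⁻¹,
    xgen ^ 2 * (zgen ^ 3)⁻¹,
    xgen * zgen * ygen * zgen⁻¹,
    xgen * ygen * zgen * (zgen * xgen)⁻¹ }

namespace BT
abbrev G := PresentedGroup btRels
def X : G := PresentedGroup.of 0
def Y : G := PresentedGroup.of 1
def Z : G := PresentedGroup.of 2

lemma rel_one {r : FreeGroup (Fin 3)} (h : r ∈ btRels) : PresentedGroup.mk btRels r = 1 :=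
  (QuotientGroup.eq_one_iff r).mpr (Subgroup.subset_normalClosure h)

lemma rel1 : X ^ 2 = Y ^ 2 := by
  have h := rel_one (show xgen ^ 2 * (ygen ^ 2)⁻¹ ∈ btRels by left; rfl)
  rwa [map_mul, map_inv, map_pow, map_pow, mul_inv_eq_one] at h

lemma rel2 : Y ^ 2 = (Y * X) ^ 2 := by
  have h := rel_one (show ygen ^ 2 * ((ygen * xgen) ^ 2)⁻¹ ∈ btRels by right; left; rfl)
  rwa [map_mul, map_inv, map_pow, map_pow, map_mul, mul_inv_eq_one] at h

lemma rel3 : X ^ 2 = Z ^ 3 := by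
  have h := rel_one (show xgen ^ 2 * (zgen ^ 3)⁻¹ ∈ btRels by right; right; left; rfl)
  rwa [map_mul, map_inv, map_pow, map_pow, mul_inv_eq_one] at h

lemma rel4 : X * Z * Y = Z := by
  have h := rel_one (show xgen * zgen * ygen * zgen⁻¹ ∈ btRels by right; right; right; left; rfl)
  rwa [map_mul, map_mul, map_mul, map_inv, mul_inv_eq_one] at h

lemma rel5 : X * Y * Z = Z * X := by
  have h := rel_one (show xgen * ygen * zgen * (zgen * xgen)⁻¹ ∈ btRels by
    right; right; right; right; rfl)
  rwa [map_mul, map_mul, map_inv, map_mul, mul_inv_eq_one] at h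

lemma hy_conj : Y = Z⁻¹ * (X⁻¹ * Z) := by
  rw [eq_inv_mul_iff_mul_eq, eq_inv_mul_iff_mul_eq, ← mul_assoc, rel4]

lemma hx2 : X ^ 2 = X⁻¹ * X⁻¹ := by
  have h2 : X ^ 2 = Z⁻¹ * (X⁻¹ * X⁻¹) * Z := by
    rw [rel1, pow_two, hy_conj]; group
  have h3 : Z * X ^ 2 * Z⁻¹ = X⁻¹ * X⁻¹ := by rw [h2]; group
  have h4 : Z * X ^ 2 * Z⁻¹ = X ^ 2 := by rw [rel3]; group
  rw [← h4, h3]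

lemma hx4 : X ^ 4 = 1 := by
  have : X ^ 4 = X ^ 2 * X ^ 2 := by group
  rw [this]
  nth_rewrite 2 [hx2]
  group

lemma hx3 : X⁻¹ = X ^ 3 := by
  rw [inv_eq_iff_mul_eq_one, ← pow_succ']
  exact hx4

lemma hyx : Y * X = X⁻¹ * Y := by
  have h : Y * Y = Y * (X * Y * X) := by
    have h2 := rel2
    rw [pow_two, pow_two] at h2
    rw [h2]; group
  have h' : Y = X * Y * X := mul_left_cancel h
  rw [eq_inv_mul_iff_mul_eq, ← mul_assoc, ← h']

lemma hzy : Z * Y = X⁻¹ * Z := by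
  rw [eq_inv_mul_iff_mul_eq, ← mul_assoc, rel4]

lemma hzx : Z * X = X * Y * Z := rel5.symm

lemma cXY : Commute (X ^ 2) Y := by
  have : Y * X ^ 2 = X ^ 2 * Y := by
    rw [pow_two, ← mul_assoc, hyx, mul_assoc, hyx, ← mul_assoc, ← hx2, pow_two]
  exact this.symm

lemma cXZ : Commute (X ^ 2) Z := by
  have : X ^ 2 * Z = Z * X ^ 2 := by rw [rel3]; group
  exact this

lemma yxa (a : ℕ) : Y * X ^ a = X ^ (3 * a) * Y := by
  induction a with
  | zero => simp
  | succ a ih =>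
    rw [pow_succ, ← mul_assoc, ih, mul_assoc, hyx, hx3, ← mul_assoc, ← pow_add,
      Nat.mul_succ]

lemma zyb (b : ℕ) : Z * Y ^ b = X ^ (3 * b) * Z := by
  induction b with
  | zero => simp
  | succ b ih =>
    rw [pow_succ, ← mul_assoc, ih, mul_assoc, hzy, hx3, ← mul_assoc, ← pow_add,
      Nat.mul_succ]


lemma ykxa (b a : ℕ) : ∃ m : ℕ, Y ^ b * X ^ a = X ^ m * Y ^ b := by
  induction b generalizing a with
  | zero => exact ⟨a, by simp⟩
  | succ b ih =>
    obtain ⟨m, hm⟩ := ih (3 * a)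
    refine ⟨m, ?_⟩
    rw [pow_succ, mul_assoc, yxa, ← mul_assoc, hm, mul_assoc, ← pow_succ]

lemma zxa (a : ℕ) : ∃ m k : ℕ, Z * X ^ a = X ^ m * Y ^ k * Z := by
  induction a with
  | zero => exact ⟨0, 0, by simp⟩
  | succ a ih =>
    obtain ⟨m, k, h⟩ := ih
    obtain ⟨m', hm'⟩ := ykxa k 1
    rw [pow_one] at hm'
    refine ⟨m + m', k + 1, ?_⟩
    rw [pow_succ, ← mul_assoc, h, mul_assoc, hzx]
    rw [show X ^ m * Y ^ k * (X * Y * Z) = X ^ m * (Y ^ k * X) * (Y * Z) by group]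
    rw [hm']
    rw [show X ^ m * (X ^ m' * Y ^ k) * (Y * Z) = (X ^ m * X ^ m') * (Y ^ k * Y) * Z by group]
    rw [← pow_add, ← pow_succ]

lemma stepX {g : G} (h : ∃ a b c : ℕ, g = X ^ a * Y ^ b * Z ^ c) :
    ∃ a b c : ℕ, X * g = X ^ a * Y ^ b * Z ^ c := by
  obtain ⟨a, b, c, rfl⟩ := h
  exact ⟨a + 1, b, c, by rw [← mul_assoc, ← mul_assoc, ← pow_succ']⟩

lemma stepY {g : G} (h : ∃ a b c : ℕ, g = X ^ a * Y ^ b * Z ^ c) :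
    ∃ a b c : ℕ, Y * g = X ^ a * Y ^ b * Z ^ c := by
  obtain ⟨a, b, c, rfl⟩ := h
  refine ⟨3 * a, b + 1, c, ?_⟩
  rw [← mul_assoc, ← mul_assoc, yxa, mul_assoc (X ^ (3 * a)), ← pow_succ']

lemma stepZ {g : G} (h : ∃ a b c : ℕ, g = X ^ a * Y ^ b * Z ^ c) :
    ∃ a b c : ℕ, Z * g = X ^ a * Y ^ b * Z ^ c := by
  obtain ⟨a, b, c, rfl⟩ := h
  obtain ⟨m, k, h1⟩ := zxa a
  obtain ⟨m', hm'⟩ := ykxa k (3 * b)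
  refine ⟨m + m', k, c + 1, ?_⟩
  rw [← mul_assoc, ← mul_assoc, h1]
  rw [show X ^ m * Y ^ k * Z * Y ^ b * Z ^ c = X ^ m * Y ^ k * (Z * Y ^ b) * Z ^ c by group]
  rw [zyb]
  rw [show X ^ m * Y ^ k * (X ^ (3 * b) * Z) * Z ^ c
      = X ^ m * (Y ^ k * X ^ (3 * b)) * (Z * Z ^ c) by group]
  rw [hm', ← pow_succ']
  rw [show X ^ m * (X ^ m' * Y ^ k) * Z ^ (c + 1) = (X ^ m * X ^ m') * Y ^ k * Z ^ (c + 1) by group]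
  rw [← pow_add]

lemma hYinv : Y⁻¹ = X * (X * Y) := by
  refine inv_eq_of_mul_eq_one_right ?_
  rw [← mul_assoc, ← mul_assoc, hyx, mul_assoc X⁻¹, hyx, ← mul_assoc, ← hx2]
  rw [mul_assoc, ← pow_two, ← rel1, ← pow_add]
  norm_num
  exact hx4

lemma hz6 : Z ^ 6 = 1 := by
  have h : Z ^ 6 = Z ^ 3 * Z ^ 3 := by rw [← pow_add]
  rw [h, ← rel3, ← pow_add]
  exact hx4

lemma hZinv : Z⁻¹ = X * (X * (Z * Z)) := by
  refine inv_eq_of_mul_eq_one_right ?_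
  have h1 : Z * (X * (X * (Z * Z))) = Z * X ^ 2 * Z ^ 2 := by rw [pow_two, pow_two]; group
  rw [h1, ← cXZ.eq, mul_assoc, ← pow_succ', rel3, ← pow_add]
  exact hz6

lemma nf (g : G) : ∃ a b c : ℕ, g = X ^ a * Y ^ b * Z ^ c := by
  have hg : g ∈ Subgroup.closure (Set.range (PresentedGroup.of : Fin 3 → G)) := by
    rw [PresentedGroup.closure_range_of]; trivial
  induction hg using Subgroup.closure_induction_left with
  | one => exact ⟨0, 0, 0, by simp⟩
  | mul_left x hx y hy ih =>
    obtain ⟨i, rfl⟩ := hx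
    fin_cases i
    · exact stepX ih
    · exact stepY ih
    · exact stepZ ih
  | inv_mul_cancel x hx y hy ih =>
    obtain ⟨i, rfl⟩ := hx
    fin_cases i
    · show ∃ a b c : ℕ, X⁻¹ * y = X ^ a * Y ^ b * Z ^ c
      have h : X⁻¹ * y = X * (X * (X * y)) := by
        rw [hx3]; simp [pow_succ, mul_assoc]
      rw [h]
      exact stepX (stepX (stepX ih))
    · show ∃ a b c : ℕ, Y⁻¹ * y = X ^ a * Y ^ b * Z ^ c
      have h : Y⁻¹ * y = X * (X * (Y * y)) := by
        rw [hYinv]; simp [mul_assoc]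
      rw [h]
      exact stepX (stepX (stepY ih))
    · show ∃ a b c : ℕ, Z⁻¹ * y = X ^ a * Y ^ b * Z ^ c
      have h : Z⁻¹ * y = X * (X * (Z * (Z * y))) := by
        rw [hZinv]; simp [mul_assoc]
      rw [h]
      exact stepX (stepX (stepZ (stepZ ih)))

def fG : Fin 4 × Fin 2 × Fin 3 → G := fun t =>
  X ^ (t.1 : ℕ) * Y ^ (t.2.1 : ℕ) * Z ^ (t.2.2 : ℕ)

lemma fG_surj : Function.Surjective fG := by
  intro g
  obtain ⟨a, b, c, rfl⟩ := nf g
  have hb : Y ^ b = X ^ (2 * (b / 2)) * Y ^ (b % 2) := by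
    conv_lhs => rw [← Nat.div_add_mod b 2]
    rw [pow_add, pow_mul, ← rel1, ← pow_mul]
  have hc : Z ^ c = X ^ (2 * (c / 3)) * Z ^ (c % 3) := by
    conv_lhs => rw [← Nat.div_add_mod c 3]
    rw [pow_add, pow_mul, ← rel3, ← pow_mul]
  refine ⟨(⟨(a + 2 * (b / 2) + 2 * (c / 3)) % 4, Nat.mod_lt _ (by norm_num)⟩,
          ⟨b % 2, Nat.mod_lt _ (by norm_num)⟩,
          ⟨c % 3, Nat.mod_lt _ (by norm_num)⟩), ?_⟩
  show X ^ ((a + 2 * (b / 2) + 2 * (c / 3)) % 4) * Y ^ (b % 2) * Z ^ (c % 3)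
      = X ^ a * Y ^ b * Z ^ c
  rw [← pow_eq_pow_mod _ hx4, hb, hc]
  have comm : Y ^ (b % 2) * X ^ (2 * (c / 3)) = X ^ (2 * (c / 3)) * Y ^ (b % 2) := by
    rw [pow_mul]
    exact ((cXY.pow_left (c / 3)).pow_right (b % 2)).eq.symm
  calc X ^ (a + 2 * (b / 2) + 2 * (c / 3)) * Y ^ (b % 2) * Z ^ (c % 3)
      = X ^ a * X ^ (2 * (b / 2)) * (X ^ (2 * (c / 3)) * Y ^ (b % 2)) * Z ^ (c % 3) := by
        rw [pow_add, pow_add]; group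
    _ = X ^ a * X ^ (2 * (b / 2)) * (Y ^ (b % 2) * X ^ (2 * (c / 3))) * Z ^ (c % 3) := by
        rw [comm]
    _ = X ^ a * (X ^ (2 * (b / 2)) * Y ^ (b % 2)) * (X ^ (2 * (c / 3)) * Z ^ (c % 3)) := by
        group

end BT

def Mx : Matrix.SpecialLinearGroup (Fin 2) (ZMod 3) := ⟨!![0,1;2,0], by decide⟩
def My : Matrix.SpecialLinearGroup (Fin 2) (ZMod 3) := ⟨!![1,1;1,2], by decide⟩
def Mz : Matrix.SpecialLinearGroup (Fin 2) (ZMod 3) := ⟨!![2,1;0,2], by decide⟩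

instance : DecidableEq (Matrix.SpecialLinearGroup (Fin 2) (ZMod 3)) :=
  fun a b => decidable_of_iff (a.1 = b.1) Subtype.ext_iff.symm

def f0 : Fin 3 → Matrix.SpecialLinearGroup (Fin 2) (ZMod 3) := ![Mx, My, Mz]

lemma hlift : ∀ r ∈ btRels, FreeGroup.lift f0 r = 1 := by
  intro r hr
  simp only [btRels, Set.mem_insert_iff, Set.mem_singleton_iff] at hr
  rcases hr with rfl | rfl | rfl | rfl | rfl <;>
    · simp only [xgen, ygen, zgen, map_mul, map_inv, map_pow, FreeGroup.lift_apply_of]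
      decide

noncomputable def phi : BT.G →* Matrix.SpecialLinearGroup (Fin 2) (ZMod 3) :=
  PresentedGroup.toGroup hlift

lemma phiX : phi BT.X = Mx := PresentedGroup.toGroup.of hlift
lemma phiY : phi BT.Y = My := PresentedGroup.toGroup.of hlift
lemma phiZ : phi BT.Z = Mz := PresentedGroup.toGroup.of hlift

lemma phi_surj : Function.Surjective phi := by
  have hpsi : Function.Surjective (fun t : Fin 4 × Fin 2 × Fin 3 =>
      Mx ^ (t.1 : ℕ) * My ^ (t.2.1 : ℕ) * Mz ^ (t.2.2 : ℕ)) := by decide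
  intro m
  obtain ⟨t, ht⟩ := hpsi m
  refine ⟨BT.fG t, ?_⟩
  rw [BT.fG]
  simp only [map_mul, map_pow, phiX, phiY, phiZ]
  exact ht

/-- The group presented by `x, y, z` with relations `x² = y² = (yx)² = z³`, `xzy = z`,
`xyz = zx` is isomorphic to `SL(2, ℤ/3)`, the binary tetrahedral group of order 24. -/
theorem stmt_7 :
    Nonempty (PresentedGroup btRels ≃* Matrix.SpecialLinearGroup (Fin 2) (ZMod 3)) := by
  haveI : Finite BT.G := Finite.of_surjective BT.fG BT.fG_surj
  have hcard : Nat.card BT.G = Nat.card (Matrix.SpecialLinearGroup (Fin 2) (ZMod 3)) := by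
    have h1 : Nat.card BT.G ≤ 24 := by
      have := Nat.card_le_card_of_surjective BT.fG BT.fG_surj
      simpa using this
    have h2 : Nat.card (Matrix.SpecialLinearGroup (Fin 2) (ZMod 3)) = 24 := by
      rw [Nat.card_eq_fintype_card]
      decide
    have h3 := Nat.card_le_card_of_surjective phi phi_surj
    omega
  exact ⟨MulEquiv.ofBijective phi
    ((Nat.bijective_iff_surjective_and_card phi).mpr ⟨phi_surj, hcard⟩)⟩
end

section
/- Let Λ₈ ⊂ ℂ² be the additive subgroup generated over ℤ by (1,1), (1,−1), (i−1,0), (0,i−1), and let a : ℂ² → ℂ² be the linear map (z₁,z₂) ↦ (i z₁, −i z₂). Then a maps Λ₈ bijectively onto itself, and the set of points of the quotient group ℂ²/Λ₈ fixed by the induced map ā consists of exactly the four classes of (0,0), (1,0), ((1+i)/2, (1+i)/2) and ((1+i)/2, (i−1)/2); in particular ā has exactly 4 fixed points. -/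
/-- The lattice `Λ₈ ⊂ ℂ²` generated over `ℤ` by `(1,1)`, `(1,-1)`, `(i-1,0)`, `(0,i-1)`. -/
noncomputable def Lambda8 : AddSubgroup (ℂ × ℂ) :=
  AddSubgroup.closure
    {(1, 1), (1, -1), (Complex.I - 1, 0), (0, Complex.I - 1)}

/-- The linear map `a(z₁,z₂) = (i z₁, -i z₂)`. -/
noncomputable def amap : ℂ × ℂ → ℂ × ℂ := fun z => (Complex.I * z.1, -Complex.I * z.2)

/-!
In the real coordinates `(Re z₁, Im z₁, Re z₂, Im z₂)`, `Λ₈` is the checkerboard lattice `D₄` of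
integer points with even coordinate sum, and `a` is an automorphism of order 4 preserving it.
The condition `a z - z ∈ Λ₈` says that `2z` is integral with all four coordinates of the same
parity, i.e. `z ∈ ℤ[i]²` or `z ∈ ((1+i)/2, (1+i)/2) + ℤ[i]²`; since `Λ₈` has index 2 in `ℤ[i]²`,
with `(1, 0)` representing the other coset, each of these two cosets gives two fixed points.
-/

open Complex

lemma mem_Lambda8_iff {w : ℂ × ℂ} :
    w ∈ Lambda8 ↔ ∃ p q r s : ℤ, w.1.re = p ∧ w.1.im = q ∧ w.2.re = r ∧ w.2.im = s ∧
      Even (p + q + r + s) := by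
  constructor
  · intro hw
    induction hw using AddSubgroup.closure_induction with
    | mem x hx =>
      simp only [Set.mem_insert_iff, Set.mem_singleton_iff] at hx
      rcases hx with rfl | rfl | rfl | rfl
      · exact ⟨1, 0, 1, 0, by norm_num⟩
      · exact ⟨1, 0, -1, 0, by norm_num⟩
      · exact ⟨-1, 1, 0, 0, by norm_num⟩
      · exact ⟨0, 0, -1, 1, by norm_num⟩
    | zero => exact ⟨0, 0, 0, 0, by norm_num⟩
    | add x y _ _ ihx ihy =>
      obtain ⟨p, q, r, s, hp, hq, hr, hs, k, hk⟩ := ihx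
      obtain ⟨p', q', r', s', hp', hq', hr', hs', k', hk'⟩ := ihy
      exact ⟨p + p', q + q', r + r', s + s', by simp [hp, hp'], by simp [hq, hq'],
        by simp [hr, hr'], by simp [hs, hs'], k + k', by omega⟩
    | neg x _ ihx =>
      obtain ⟨p, q, r, s, hp, hq, hr, hs, k, hk⟩ := ihx
      exact ⟨-p, -q, -r, -s, by simp [hp], by simp [hq], by simp [hr], by simp [hs], -k,
        by omega⟩
  · rintro ⟨p, q, r, s, hp, hq, hr, hs, k, hk⟩
    have hk' : (p : ℝ) + q + r + s = k + k := by exact_mod_cast hk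
    have hw : w = k • ((1 : ℂ), (1 : ℂ)) + (p + q - k) • ((1 : ℂ), (-1 : ℂ)) +
        q • (I - 1, (0 : ℂ)) + s • ((0 : ℂ), I - 1) := by
      refine Prod.ext (Complex.ext ?_ ?_) (Complex.ext ?_ ?_) <;> simp [hp, hq, hr, hs]
      linarith
    rw [hw]
    refine add_mem (add_mem (add_mem ?_ ?_) ?_) ?_ <;>
      exact zsmul_mem (AddSubgroup.subset_closure (by simp)) _

lemma amap_mem_Lambda8 {w : ℂ × ℂ} (hw : w ∈ Lambda8) : amap w ∈ Lambda8 := by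
  obtain ⟨p, q, r, s, hp, hq, hr, hs, k, hk⟩ := mem_Lambda8_iff.1 hw
  exact mem_Lambda8_iff.2 ⟨-q, p, s, -r, by simp [amap, hq], by simp [amap, hp],
    by simp [amap, hs], by simp [amap, hr], k - q - r, by omega⟩

lemma amap_amap_amap_amap (z : ℂ × ℂ) : amap (amap (amap (amap z))) = z := by
  ext <;> simp [amap, ← mul_assoc]

lemma amap_bijOn_Lambda8 : Set.BijOn amap (Lambda8 : Set (ℂ × ℂ)) (Lambda8 : Set (ℂ × ℂ)) := by
  have hmaps : Set.MapsTo amap (Lambda8 : Set (ℂ × ℂ)) Lambda8 := fun _ => amap_mem_Lambda8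
  exact Set.InvOn.bijOn (f' := fun w => amap (amap (amap w)))
    ⟨fun z _ => amap_amap_amap_amap z, fun z _ => amap_amap_amap_amap z⟩ hmaps
    (hmaps.comp (hmaps.comp hmaps))

def gaussianPoints : Set (ℂ × ℂ) :=
  {w | ∃ p q r s : ℤ, w.1.re = p ∧ w.1.im = q ∧ w.2.re = r ∧ w.2.im = s}

lemma mem_Lambda8_or_sub_mem_of_mem_gaussianPoints {w : ℂ × ℂ} (hw : w ∈ gaussianPoints) :
    w ∈ Lambda8 ∨ w - (1, 0) ∈ Lambda8 := by
  obtain ⟨p, q, r, s, hp, hq, hr, hs⟩ := hw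
  rcases Int.even_or_odd (p + q + r + s) with he | ⟨k, hk⟩
  · exact .inl (mem_Lambda8_iff.2 ⟨p, q, r, s, hp, hq, hr, hs, he⟩)
  · refine .inr (mem_Lambda8_iff.2 ⟨p - 1, q, r, s, ?_, ?_, ?_, ?_, k, by omega⟩) <;>
      simp [hp, hq, hr, hs]

lemma mem_gaussianPoints_of_amap_sub_self_mem {z : ℂ × ℂ} (hz : amap z - z ∈ Lambda8) :
    z ∈ gaussianPoints ∨ z - ((1 + I) / 2, (1 + I) / 2) ∈ gaussianPoints := by
  obtain ⟨p, q, r, s, hp, hq, hr, hs, k, hk⟩ := mem_Lambda8_iff.1 hz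
  simp only [amap, Prod.fst_sub, Prod.snd_sub, sub_re, sub_im, mul_re, mul_im, neg_re, neg_im,
    I_re, I_im] at hp hq hr hs
  have hk' : (p : ℝ) + q + r + s = k + k := by exact_mod_cast hk
  -- `(i - 1) z₁ = p + q i` and `-(1 + i) z₂ = r + s i` give
  -- `z₁ = ((q - p) - (p + q) i) / 2` and `z₂ = (-(r + s) + (r - s) i) / 2`.
  rcases Int.even_or_odd (p + q) with ⟨m, hm⟩ | ⟨m, hm⟩
  · have hm' : (p : ℝ) + q = m + m := by exact_mod_cast hm
    refine .inl ⟨m - p, -m, m - k, k - m - s, ?_, ?_, ?_, ?_⟩ <;> push_cast <;> linarith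
  · have hm' : (p : ℝ) + q = 2 * m + 1 := by exact_mod_cast hm
    refine .inr ⟨m - p, -m - 1, m - k, k - m - s - 1, ?_, ?_, ?_, ?_⟩ <;>
      simp only [Prod.fst_sub, Prod.snd_sub, sub_re, sub_im, div_re, div_im] <;> norm_num <;>
      linarith

lemma mk_mem_of_amap_sub_self_mem {z : ℂ × ℂ} (hz : amap z - z ∈ Lambda8) :
    (QuotientAddGroup.mk z : (ℂ × ℂ) ⧸ Lambda8) ∈
      ({QuotientAddGroup.mk (0, 0), QuotientAddGroup.mk (1, 0),
        QuotientAddGroup.mk ((1 + I) / 2, (1 + I) / 2),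
        QuotientAddGroup.mk ((1 + I) / 2, (I - 1) / 2)} : Set ((ℂ × ℂ) ⧸ Lambda8)) := by
  simp only [Set.mem_insert_iff, Set.mem_singleton_iff, QuotientAddGroup.eq_iff_sub_mem]
  rcases mem_gaussianPoints_of_amap_sub_self_mem hz with hz | hz <;>
    rcases mem_Lambda8_or_sub_mem_of_mem_gaussianPoints hz with h | h
  · exact .inl (by rwa [Prod.mk_zero_zero, sub_zero])
  · exact .inr (.inl h)
  · exact .inr (.inr (.inl h))
  · refine .inr (.inr (.inr ?_))
    have h11 : ((1 : ℂ), (1 : ℂ)) ∈ Lambda8 := AddSubgroup.subset_closure (by simp)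
    convert add_mem h h11 using 1
    ext <;> simp only [Prod.fst_sub, Prod.snd_sub, Prod.fst_add, Prod.snd_add] <;> ring

lemma fixedPoints_eq :
    {x : (ℂ × ℂ) ⧸ Lambda8 |
        ∃ z : ℂ × ℂ, (QuotientAddGroup.mk z : (ℂ × ℂ) ⧸ Lambda8) = x ∧ amap z - z ∈ Lambda8} =
      {QuotientAddGroup.mk (0, 0), QuotientAddGroup.mk (1, 0),
        QuotientAddGroup.mk ((1 + I) / 2, (1 + I) / 2),
        QuotientAddGroup.mk ((1 + I) / 2, (I - 1) / 2)} := by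
  refine Set.Subset.antisymm (fun _ ⟨z, hzx, hz⟩ => hzx ▸ mk_mem_of_amap_sub_self_mem hz) ?_
  rintro _ (rfl | rfl | rfl | rfl) <;> refine ⟨_, rfl, mem_Lambda8_iff.2 ?_⟩
  · exact ⟨0, 0, 0, 0, by simp [amap]⟩
  · exact ⟨-1, 1, 0, 0, by simp [amap]⟩
  · exact ⟨-1, 0, 0, -1, by norm_num [amap]⟩
  · exact ⟨-1, 0, 1, 0, by norm_num [amap]⟩

lemma one_zero_notMem_Lambda8 : ((1 : ℂ), (0 : ℂ)) ∉ Lambda8 := by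
  rw [mem_Lambda8_iff]
  rintro ⟨p, q, r, s, hp, hq, hr, hs, k, hk⟩
  simp only [one_re, one_im, zero_re, zero_im] at hp hq hr hs
  norm_cast at hp hq hr hs
  omega

lemma zero_one_notMem_Lambda8 : ((0 : ℂ), (1 : ℂ)) ∉ Lambda8 := by
  rw [mem_Lambda8_iff]
  rintro ⟨p, q, r, s, hp, hq, hr, hs, k, hk⟩
  simp only [one_re, one_im, zero_re, zero_im] at hp hq hr hs
  norm_cast at hp hq hr hs
  omega

lemma notMem_Lambda8_of_fst_im_eq_neg_half {w : ℂ × ℂ} (hw : w.1.im = -1 / 2) :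
    w ∉ Lambda8 := by
  rw [mem_Lambda8_iff]
  rintro ⟨p, q, r, s, -, hq, -, -, -⟩
  have h2q : ((2 * q : ℤ) : ℝ) = -1 := by push_cast; linarith
  norm_cast at h2q
  omega

/-- `a` maps `Λ₈` bijectively onto itself, and the fixed points of the induced map on
`ℂ²/Λ₈` are exactly the classes of `(0,0)`, `(1,0)`, `((1+i)/2,(1+i)/2)`,
`((1+i)/2,(i-1)/2)`; in particular there are exactly 4 of them. -/
theorem stmt_11 :
    Set.BijOn amap (Lambda8 : Set (ℂ × ℂ)) (Lambda8 : Set (ℂ × ℂ)) ∧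
    {x : (ℂ × ℂ) ⧸ Lambda8 |
        ∃ z : ℂ × ℂ, (QuotientAddGroup.mk z : (ℂ × ℂ) ⧸ Lambda8) = x ∧ amap z - z ∈ Lambda8} =
      {QuotientAddGroup.mk (0, 0), QuotientAddGroup.mk (1, 0),
        QuotientAddGroup.mk ((1 + Complex.I) / 2, (1 + Complex.I) / 2),
        QuotientAddGroup.mk ((1 + Complex.I) / 2, (Complex.I - 1) / 2)} ∧
    Nat.card
      {x : (ℂ × ℂ) ⧸ Lambda8 //
        ∃ z : ℂ × ℂ, (QuotientAddGroup.mk z : (ℂ × ℂ) ⧸ Lambda8) = x ∧ amap z - z ∈ Lambda8} =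
      4 := by
  refine ⟨amap_bijOn_Lambda8, fixedPoints_eq, ?_⟩
  rw [← Set.coe_ofPred, Nat.card_coe_set_eq, fixedPoints_eq, Set.ncard_eq_four]
  refine ⟨_, _, _, _, ?_, ?_, ?_, ?_, ?_, ?_, rfl⟩ <;>
    rw [Ne, QuotientAddGroup.eq_iff_sub_mem]
  · rw [Prod.mk_zero_zero, zero_sub, neg_mem_iff]
    exact one_zero_notMem_Lambda8
  iterate 4 exact notMem_Lambda8_of_fst_im_eq_neg_half (by norm_num)
  · convert zero_one_notMem_Lambda8 using 2
    ext <;> simp only [Prod.fst_sub, Prod.snd_sub] <;> ring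
end

section
/- Let Λ₈ ⊂ ℂ² be the additive subgroup generated over ℤ by (1,1), (1,−1), (i−1,0), (0,i−1). There is no point (z₁,z₂) ∈ ℂ² such that both (i·z₁ − z₁, −i·z₂ − z₂) ∈ Λ₈ and (z₂ + 1 − z₁, −z₁ − z₂) ∈ Λ₈. Equivalently, the maps of ℂ²/Λ₈ induced by the linear map a(z₁,z₂) = (i z₁, −i z₂) and by the affine map b′(z₁,z₂) = (z₂ + 1, −z₁) have no common fixed point. -/
/-- Auxiliary subgroup: integer coordinates with even sum. -/
noncomputable def Laux : AddSubgroup (ℂ × ℂ) where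
  carrier := {v | ∃ a b c d : ℤ, v.1.re = a ∧ v.1.im = b ∧ v.2.re = c ∧ v.2.im = d ∧
      Even (a + b + c + d)}
  zero_mem' := ⟨0, 0, 0, 0, by simp⟩
  add_mem' := by
    rintro v w ⟨a, b, c, d, h1, h2, h3, h4, h5⟩ ⟨a', b', c', d', g1, g2, g3, g4, g5⟩
    refine ⟨a + a', b + b', c + c', d + d', ?_, ?_, ?_, ?_, ?_⟩
    · simp [Complex.add_re, h1, g1]
    · simp [Complex.add_im, h2, g2]
    · simp [Complex.add_re, h3, g3]
    · simp [Complex.add_im, h4, g4]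
    · obtain ⟨r, hr⟩ := h5; obtain ⟨s, hs⟩ := g5; exact ⟨r + s, by omega⟩
  neg_mem' := by
    rintro v ⟨a, b, c, d, h1, h2, h3, h4, h5⟩
    refine ⟨-a, -b, -c, -d, by simp [h1], by simp [h2], by simp [h3], by simp [h4], ?_⟩
    obtain ⟨r, hr⟩ := h5; exact ⟨-r, by omega⟩

lemma Lambda8_le_Laux : Lambda8 ≤ Laux := by
  rw [Lambda8, AddSubgroup.closure_le]
  rintro v hv
  simp only [Set.mem_insert_iff, Set.mem_singleton_iff] at hv
  rcases hv with rfl | rfl | rfl | rfl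
  · exact ⟨1, 0, 1, 0, by norm_num, by norm_num, by norm_num, by norm_num, ⟨1, by ring⟩⟩
  · exact ⟨1, 0, -1, 0, by norm_num, by norm_num, by norm_num, by norm_num, ⟨0, by ring⟩⟩
  · exact ⟨-1, 1, 0, 0, by simp, by simp, by norm_num, by norm_num, ⟨0, by ring⟩⟩
  · exact ⟨0, 0, -1, 1, by norm_num, by norm_num, by simp, by simp, ⟨0, by ring⟩⟩

/-- The maps of `ℂ²/Λ₈` induced by `a(z₁,z₂) = (i z₁, -i z₂)` and by
`b′(z₁,z₂) = (z₂ + 1, -z₁)` have no common fixed point: there is no `(z₁,z₂) ∈ ℂ²` with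
`(i z₁ - z₁, -i z₂ - z₂) ∈ Λ₈` and `(z₂ + 1 - z₁, -z₁ - z₂) ∈ Λ₈`. -/
theorem stmt_12 :
    ¬ ∃ z : ℂ × ℂ,
        (Complex.I * z.1 - z.1, -Complex.I * z.2 - z.2) ∈ Lambda8 ∧
        (z.2 + 1 - z.1, -z.1 - z.2) ∈ Lambda8 := by
  rintro ⟨⟨z₁, z₂⟩, h1, h2⟩
  obtain ⟨a, b, c, d, ha, hb, hc, hd, he⟩ := Lambda8_le_Laux h1
  obtain ⟨a', b', c', d', ha', hb', hc', hd', he'⟩ := Lambda8_le_Laux h2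
  simp only [Complex.sub_re, Complex.sub_im, Complex.add_re, Complex.add_im,
    Complex.mul_re, Complex.mul_im, Complex.neg_re, Complex.neg_im,
    Complex.I_re, Complex.I_im, Complex.one_re, Complex.one_im] at ha hb hc hd ha' hb' hc' hd'
  have key : (a' : ℝ) + b' + c' + d' = 1 + 2 * a := by
    rw [← ha, ← ha', ← hb', ← hc', ← hd']; ring
  have keyZ : a' + b' + c' + d' = 1 + 2 * a := by exact_mod_cast key
  obtain ⟨r, hr⟩ := he'
  omega
end

section
/- Let Λ₈ ⊂ ℂ² be the additive subgroup generated over ℤ by (1,1), (1,−1), (i−1,0), (0,i−1). The linear map a(z₁,z₂) = (i z₁, −i z₂) and the affine map b′(z₁,z₂) = (z₂ + 1, −z₁) map Λ₈-congruence classes to Λ₈-congruence classes and hence induce bijections ā, b̄′ of the quotient group ℂ²/Λ₈. The subgroup of the permutation group of ℂ²/Λ₈ generated by ā and b̄′ is isomorphic to the quaternion group of order 8 (the dicyclic group QuaternionGroup 2). -/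
/-- The affine map `b′(z₁,z₂) = (z₂ + 1, -z₁)`. -/
noncomputable def bmap : ℂ × ℂ → ℂ × ℂ := fun z => (z.2 + 1, -z.1)

namespace QuaternionGroup

variable {n : ℕ} [NeZero n] {G : Type*} [Group G] {A B : G}

theorem pow_val_add (hA : A ^ (2 * n) = 1) (i j : ZMod (2 * n)) :
    A ^ (i + j).val = A ^ i.val * A ^ j.val := by
  rw [ZMod.val_add, ← pow_eq_pow_mod _ hA, pow_add]

theorem pow_val_neg (hA : A ^ (2 * n) = 1) (i : ZMod (2 * n)) :
    A ^ (-i).val = (A ^ i.val)⁻¹ :=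
  eq_inv_of_mul_eq_one_left <| by rw [← pow_val_add hA, neg_add_cancel, ZMod.val_zero, pow_zero]

theorem pow_val_natCast_self : A ^ (n : ZMod (2 * n)).val = A ^ n := by
  rw [ZMod.val_natCast, Nat.mod_eq_of_lt (by have := NeZero.pos n; omega)]

theorem pow_val_mul_eq_mul_pow_val_neg (hA : A ^ (2 * n) = 1) (hB : B ^ 2 = A ^ n)
    (hBA : (B * A) ^ 2 = A ^ n) (i : ZMod (2 * n)) :
    A ^ i.val * B = B * A ^ (-i).val := by
  have hABA : A * B * A = B := mul_left_cancel (a := B) <| by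
    rw [← sq, hB, ← hBA, sq]; group
  have hconj : SemiconjBy B A⁻¹ A := by
    rw [SemiconjBy]; nth_rewrite 1 [← hABA]; group
  rw [pow_val_neg hA, ← inv_pow, (hconj.pow_right _).eq]

def lift (hA : A ^ (2 * n) = 1) (hB : B ^ 2 = A ^ n) (hBA : (B * A) ^ 2 = A ^ n) :
    QuaternionGroup n →* G :=
  MonoidHom.mk' (fun | a i => A ^ i.val | xa i => B * A ^ i.val) <| by
    have hcomm := pow_val_mul_eq_mul_pow_val_neg hA hB hBA
    rintro (i | i) (j | j)
    · simp only [a_mul_a, pow_val_add hA]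
    · simp only [a_mul_xa]
      rw [← mul_assoc, hcomm, mul_assoc, ← pow_val_add hA, neg_add_eq_sub]
    · simp only [xa_mul_a, mul_assoc, pow_val_add hA]
    · simp only [xa_mul_xa]
      rw [add_sub_assoc, ← neg_add_eq_sub, pow_val_add hA, pow_val_natCast_self, pow_val_add hA,
        mul_assoc B, ← mul_assoc (A ^ i.val), hcomm, ← hB, sq]
      simp only [mul_assoc]

section lift

variable (hA : A ^ (2 * n) = 1) (hB : B ^ 2 = A ^ n) (hBA : (B * A) ^ 2 = A ^ n)

@[simp] theorem lift_a (i : ZMod (2 * n)) : lift hA hB hBA (a i) = A ^ i.val := rfl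

@[simp] theorem lift_xa (i : ZMod (2 * n)) : lift hA hB hBA (xa i) = B * A ^ i.val := rfl

theorem range_lift : (lift hA hB hBA).range = Subgroup.closure {A, B} := by
  have hA_mem : A ∈ Subgroup.closure {A, B} := Subgroup.subset_closure (by simp)
  have hB_mem : B ∈ Subgroup.closure {A, B} := Subgroup.subset_closure (by simp)
  refine le_antisymm ?_ ((Subgroup.closure_le _).2 ?_)
  · rintro _ ⟨i | i, rfl⟩
    · exact pow_mem hA_mem _
    · exact mul_mem hB_mem (pow_mem hA_mem _)
  · rintro x (rfl | rfl)
    · refine ⟨a 1, ?_⟩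
      rw [lift_a, ZMod.val_one_eq_one_mod, Nat.mod_eq_of_lt (by have := NeZero.pos n; omega),
        pow_one]
    · exact ⟨xa 0, by simp⟩

end lift

theorem lift_injective_of_sq_ne_one (hA : A ^ (2 * 2) = 1) (hB : B ^ 2 = A ^ 2)
    (hBA : (B * A) ^ 2 = A ^ 2) (hA2 : A ^ 2 ≠ 1) : Function.Injective (lift hA hB hBA) := by
  have hsq : ∀ g : QuaternionGroup 2, g ≠ 1 → g = a 2 ∨ g ^ 2 = a 2 := by decide
  rw [injective_iff_map_eq_one]
  intro g hg
  by_contra hne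
  apply hA2
  change lift hA hB hBA (a 2) = 1
  rcases hsq g hne with rfl | hg2
  · exact hg
  · rw [← hg2, map_pow, hg, one_pow]

theorem nonempty_closure_mulEquiv_two (hA : A ^ (2 * 2) = 1) (hB : B ^ 2 = A ^ 2)
    (hBA : (B * A) ^ 2 = A ^ 2) (hA2 : A ^ 2 ≠ 1) :
    Nonempty (Subgroup.closure {A, B} ≃* QuaternionGroup 2) :=
  ⟨(MulEquiv.subgroupCongr (range_lift hA hB hBA)).symm.trans
    (MonoidHom.ofInjective (lift_injective_of_sq_ne_one hA hB hBA hA2)).symm⟩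

end QuaternionGroup

namespace QuotientAddGroup

variable {G : Type*} [AddCommGroup G] {L : AddSubgroup G}

def affinePerm (e : G ≃+ G) (he : L.map e.toAddMonoidHom = L) (t : G) : Equiv.Perm (G ⧸ L) :=
  (congr L L e he).toEquiv.trans (Equiv.addRight (t : G ⧸ L))

theorem affinePerm_mk (e : G ≃+ G) (he : L.map e.toAddMonoidHom = L) (t z : G) :
    affinePerm e he t (z : G ⧸ L) = ((e z + t : G) : G ⧸ L) := rfl

def Induces (f : G → G) (A : Equiv.Perm (G ⧸ L)) : Prop :=
  ∀ z : G, A z = (f z : G ⧸ L)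

theorem Induces.mul {f g : G → G} {A B : Equiv.Perm (G ⧸ L)} (hA : Induces f A)
    (hB : Induces g B) : Induces (g ∘ f) (B * A) := fun z => by
  rw [Equiv.Perm.mul_apply, hA, hB, Function.comp_apply]

theorem Induces.eq_of_sub_mem {f f' : G → G} {A A' : Equiv.Perm (G ⧸ L)} (hA : Induces f A)
    (hA' : Induces f' A') (h : ∀ z, f z - f' z ∈ L) : A = A' :=
  Equiv.ext fun x => induction_on x fun z => by
    rw [hA, hA', eq_iff_sub_mem]
    exact h z

theorem Induces.sub_mem_of_eq_one {f : G → G} {A : Equiv.Perm (G ⧸ L)} (hA : Induces f A)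
    (h : A = 1) (z : G) : f z - z ∈ L := by
  rw [← eq_iff_sub_mem, ← hA, h, Equiv.Perm.one_apply]

end QuotientAddGroup

theorem AddSubgroup.map_equiv_eq_self {G : Type*} [AddGroup G] {L : AddSubgroup G} {e : G ≃+ G}
    (he : ∀ v ∈ L, e v ∈ L) (he' : ∀ v ∈ L, e.symm v ∈ L) : L.map e.toAddMonoidHom = L :=
  le_antisymm (AddSubgroup.map_le_iff_le_comap.2 he) fun v hv => ⟨e.symm v, he' v hv, by simp⟩

open Complex QuotientAddGroup

def D4 : AddSubgroup (ℂ × ℂ) where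
  carrier := {z | ∃ p q r s : ℤ, Even (p + q + r + s) ∧ z = (p + q * I, r + s * I)}
  zero_mem' := ⟨0, 0, 0, 0, by simp, by ext <;> simp⟩
  add_mem' := by
    rintro _ _ ⟨p, q, r, s, hpqrs, rfl⟩ ⟨p', q', r', s', hpqrs', rfl⟩
    refine ⟨p + p', q + q', r + r', s + s', ?_, ?_⟩
    · rw [Int.even_iff] at *; omega
    · simp only [Prod.mk_add_mk, Prod.mk.injEq]; push_cast; constructor <;> ring
  neg_mem' := by
    rintro _ ⟨p, q, r, s, hpqrs, rfl⟩
    refine ⟨-p, -q, -r, -s, ?_, ?_⟩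
    · rw [Int.even_iff] at *; omega
    · simp only [Prod.neg_mk, Prod.mk.injEq]; push_cast; constructor <;> ring

theorem Lambda8_eq_D4 : Lambda8 = D4 := by
  refine le_antisymm ((AddSubgroup.closure_le _).2 ?_) ?_
  · rintro z (rfl | rfl | rfl | rfl)
    · exact ⟨1, 0, 1, 0, by decide, by simp⟩
    · exact ⟨1, 0, -1, 0, by decide, by simp⟩
    · exact ⟨-1, 1, 0, 0, by decide, by simp; ring⟩
    · exact ⟨0, 0, -1, 1, by decide, by simp; ring⟩
  · rintro _ ⟨p, q, r, s, ⟨k, hk⟩, rfl⟩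
    have gen : ∀ v ∈ ({(1, 1), (1, -1), (I - 1, 0), (0, I - 1)} : Set (ℂ × ℂ)), v ∈ Lambda8 :=
      fun v hv => AddSubgroup.subset_closure hv
    have hcomb := add_mem (add_mem (add_mem (zsmul_mem (gen (1, 1) (by simp)) k)
      (zsmul_mem (gen (1, -1) (by simp)) (p + q - k))) (zsmul_mem (gen (I - 1, 0) (by simp)) q))
      (zsmul_mem (gen (0, I - 1) (by simp)) s)
    convert hcomb using 1
    have hr : (r : ℂ) = k + k - p - q - s := by exact_mod_cast (show r = k + k - p - q - s by omega)
    ext <;> simp [hr] <;> ring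

theorem one_neg_one_mem_Lambda8 : ((1, -1) : ℂ × ℂ) ∈ Lambda8 :=
  AddSubgroup.subset_closure (by simp)

theorem one_neg_I_mem_Lambda8 : ((1, -I) : ℂ × ℂ) ∈ Lambda8 := by
  rw [Lambda8_eq_D4]
  exact ⟨1, 0, 0, -1, by decide, by simp⟩

theorem one_zero_not_mem_Lambda8 : ((1, 0) : ℂ × ℂ) ∉ Lambda8 := by
  rw [Lambda8_eq_D4]
  rintro ⟨p, q, r, s, hpqrs, he⟩
  simp only [Prod.ext_iff, Complex.ext_iff] at he
  norm_num at he
  norm_cast at he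
  rw [Int.even_iff] at hpqrs
  omega

@[simps]
noncomputable def aEquiv : ℂ × ℂ ≃+ ℂ × ℂ where
  toFun := amap
  invFun z := (-I * z.1, I * z.2)
  left_inv z := by simp [amap, ← mul_assoc]
  right_inv z := by simp [amap, ← mul_assoc]
  map_add' z w := by simp [amap, mul_add]

@[simps]
def bEquiv : ℂ × ℂ ≃+ ℂ × ℂ where
  toFun z := (z.2, -z.1)
  invFun z := (-z.2, z.1)
  left_inv z := by simp
  right_inv z := by simp
  map_add' z w := by simp [add_comm]

theorem bEquiv_add_one_zero (z : ℂ × ℂ) : bEquiv z + (1, 0) = bmap z := by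
  simp [bmap]

theorem map_aEquiv_Lambda8 : Lambda8.map aEquiv.toAddMonoidHom = Lambda8 := by
  rw [Lambda8_eq_D4]
  refine AddSubgroup.map_equiv_eq_self ?_ ?_ <;> rintro _ ⟨p, q, r, s, hpqrs, rfl⟩
  · refine ⟨-q, p, s, -r, by rw [Int.even_iff] at *; omega, ?_⟩
    simp [amap, Prod.ext_iff, Complex.ext_iff]
  · refine ⟨q, -p, -s, r, by rw [Int.even_iff] at *; omega, ?_⟩
    simp [Prod.ext_iff, Complex.ext_iff]

theorem map_bEquiv_Lambda8 : Lambda8.map bEquiv.toAddMonoidHom = Lambda8 := by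
  rw [Lambda8_eq_D4]
  refine AddSubgroup.map_equiv_eq_self ?_ ?_ <;> rintro _ ⟨p, q, r, s, hpqrs, rfl⟩
  · refine ⟨r, s, -p, -q, by rw [Int.even_iff] at *; omega, ?_⟩
    simp [Prod.ext_iff, Complex.ext_iff]
  · refine ⟨-r, -s, p, q, by rw [Int.even_iff] at *; omega, ?_⟩
    simp [Prod.ext_iff, Complex.ext_iff]

theorem amap_amap (z : ℂ × ℂ) : amap (amap z) = -z := by
  ext <;> simp [amap, ← mul_assoc]

theorem bmap_bmap (z : ℂ × ℂ) : bmap (bmap z) = (1, -1) - z := by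
  ext <;> simp [bmap] <;> ring

theorem bmap_amap_bmap_amap (z : ℂ × ℂ) : bmap (amap (bmap (amap z))) = (1, -I) - z := by
  ext
  · simp [amap, bmap]; linear_combination z.1 * I_sq
  · simp [amap, bmap]; linear_combination z.2 * I_sq

section relations

variable {A B : Equiv.Perm ((ℂ × ℂ) ⧸ Lambda8)}

theorem pow_four_eq_one_of_induces_amap (hA : Induces amap A) : A ^ 4 = 1 := by
  rw [show 4 = 2 + 2 from rfl, pow_add, sq]
  refine ((hA.mul hA).mul (hA.mul hA)).eq_of_sub_mem (f' := id) (fun _ => rfl) ?_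
  simp [amap_amap]

theorem sq_eq_sq_of_induces (hA : Induces amap A) (hB : Induces bmap B) : B ^ 2 = A ^ 2 := by
  rw [sq, sq]
  refine (hB.mul hB).eq_of_sub_mem (hA.mul hA) fun z => ?_
  simpa [bmap_bmap, amap_amap] using one_neg_one_mem_Lambda8

theorem mul_sq_eq_sq_of_induces (hA : Induces amap A) (hB : Induces bmap B) :
    (B * A) ^ 2 = A ^ 2 := by
  rw [sq, sq]
  refine ((hA.mul hB).mul (hA.mul hB)).eq_of_sub_mem (hA.mul hA) fun z => ?_
  simpa [bmap_amap_bmap_amap, amap_amap] using one_neg_I_mem_Lambda8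

theorem sq_ne_one_of_induces_amap (hA : Induces amap A) : A ^ 2 ≠ 1 := by
  rw [sq]
  intro h
  have := (hA.mul hA).sub_mem_of_eq_one h (-1 / 2, 0)
  norm_num [amap_amap] at this
  exact one_zero_not_mem_Lambda8 this

end relations

/-- `a` and `b′` induce bijections `ā`, `b̄′` of `ℂ²/Λ₈`, and the subgroup of the
permutation group of `ℂ²/Λ₈` generated by `ā` and `b̄′` is isomorphic to the quaternion
group of order 8. -/
theorem stmt_13 :
    (∃ A B : Equiv.Perm ((ℂ × ℂ) ⧸ Lambda8),
      (∀ z : ℂ × ℂ, A (QuotientAddGroup.mk z) = QuotientAddGroup.mk (amap z)) ∧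
      (∀ z : ℂ × ℂ, B (QuotientAddGroup.mk z) = QuotientAddGroup.mk (bmap z))) ∧
    ∀ A B : Equiv.Perm ((ℂ × ℂ) ⧸ Lambda8),
      (∀ z : ℂ × ℂ, A (QuotientAddGroup.mk z) = QuotientAddGroup.mk (amap z)) →
      (∀ z : ℂ × ℂ, B (QuotientAddGroup.mk z) = QuotientAddGroup.mk (bmap z)) →
      Nonempty ((Subgroup.closure {A, B} : Subgroup (Equiv.Perm ((ℂ × ℂ) ⧸ Lambda8)))
        ≃* QuaternionGroup 2) := by
  refine ⟨⟨affinePerm aEquiv map_aEquiv_Lambda8 0, affinePerm bEquiv map_bEquiv_Lambda8 (1, 0),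
    fun z => ?_, fun z => ?_⟩, fun A B hA hB => ?_⟩
  · rw [affinePerm_mk, add_zero, aEquiv_apply]
  · rw [affinePerm_mk, bEquiv_add_one_zero]
  · exact QuaternionGroup.nonempty_closure_mulEquiv_two (pow_four_eq_one_of_induces_amap hA)
      (sq_eq_sq_of_induces hA hB) (mul_sq_eq_sq_of_induces hA hB) (sq_ne_one_of_induces_amap hA)
end

section
/- Every finite subgroup of SL(2,ℂ) of odd order is cyclic. -/
/-!
If `∑_{g ∈ G} g ≠ 0`, a nonzero vector in its image is fixed by `G`. Otherwise `∑ tr g = 0`;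
as squaring permutes a group of odd order and `tr (g ^ 2) = tr g * tr g⁻¹ - 2` on `SL(2)`, this
gives `∑ tr g * tr g⁻¹ = 2 |G|`. Averaging the matrix units under conjugation by `G` shows that
this sum would be `|G|` if only scalars commuted with `G`; so a non-scalar `A` commutes with `G`,
and its eigenline, being one-dimensional, is `G`-stable. Either way `G` has a common eigenvector
`v`, and the eigenvalue on `v` embeds `G` into `ℂˣ`: an element of `SL(2)` fixing `v` is unipotent,
and a unipotent matrix of finite order in characteristic zero is `1`.
-/

open Matrix
open scoped MatrixGroups

lemma one_add_pow_of_mul_self_eq_zero {R : Type*} [Ring R] {N : R} (hN : N * N = 0) (n : ℕ) :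
    (1 + N) ^ n = 1 + n • N := by
  induction n with
  | zero => simp
  | succ n ih =>
    rw [pow_succ, ih, succ_nsmul]
    simp only [add_mul, mul_add, one_mul, mul_one, smul_mul_assoc, hN, smul_zero, add_zero]
    abel

namespace Matrix

section Averaging

variable {G R ι : Type*} [Group G] [Fintype G] [CommRing R] [Fintype ι] [DecidableEq ι]

def conjSum (ρ : G →* Matrix ι ι R) (C : Matrix ι ι R) : Matrix ι ι R :=
  ∑ g, ρ g * C * ρ g⁻¹

lemma commute_conjSum (ρ : G →* Matrix ι ι R) (C : Matrix ι ι R) (h : G) :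
    Commute (ρ h) (conjSum ρ C) := by
  have key (g : G) : ρ h * (ρ g * C * ρ g⁻¹) = ρ (h * g) * C * ρ (h * g)⁻¹ * ρ h := by
    rw [mul_assoc _ (ρ (h * g)⁻¹), ← map_mul, show (h * g)⁻¹ * h = g⁻¹ by group, map_mul]
    simp only [mul_assoc]
  calc ρ h * conjSum ρ C = ∑ g, ρ (h * g) * C * ρ (h * g)⁻¹ * ρ h := by
        simp only [conjSum, Finset.mul_sum, key]
    _ = conjSum ρ C * ρ h := by
        rw [(Group.mulLeft_bijective h).sum_comp (fun g => ρ g * C * ρ g⁻¹ * ρ h), conjSum,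
          Finset.sum_mul]

lemma trace_conjSum (ρ : G →* Matrix ι ι R) (C : Matrix ι ι R) :
    trace (conjSum ρ C) = Fintype.card G * trace C := by
  have h (g : G) : trace (ρ g * C * ρ g⁻¹) = trace C := by
    rw [trace_mul_cycle, ← map_mul, inv_mul_cancel, map_one, one_mul]
  simp [conjSum, trace_sum, h]

lemma sum_conjSum_single_apply (ρ : G →* Matrix ι ι R) :
    ∑ i, ∑ j, conjSum ρ (single i j 1) i j = ∑ g, trace (ρ g) * trace (ρ g⁻¹) := by
  have h (A B : Matrix ι ι R) (i j : ι) : (A * single i j (1 : R) * B) i j = A i i * B j j := by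
    simp [mul_apply, single_apply, ite_and]
  simp only [conjSum, sum_apply, h, trace, diag, Finset.sum_mul_sum]
  exact (Finset.sum_congr rfl fun i _ => Finset.sum_comm).trans Finset.sum_comm

theorem sum_trace_mul_trace_inv_eq_card [IsDomain R] (ρ : G →* Matrix ι ι R)
    (hι : (Fintype.card ι : R) ≠ 0)
    (hcomm : ∀ A, (∀ g, Commute (ρ g) A) → A ∈ Set.range (scalar ι)) :
    ∑ g, trace (ρ g) * trace (ρ g⁻¹) = Fintype.card G := by
  choose c hc using fun i j => hcomm _ (commute_conjSum ρ (single i j 1))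
  have hdiag (i : ι) : Fintype.card ι * c i i = Fintype.card G := by
    simpa [trace_conjSum] using congrArg trace (hc i i)
  rw [← sum_conjSum_single_apply]
  simp only [← hc, scalar_apply, diagonal_apply, Finset.sum_ite_eq, Finset.mem_univ, if_true]
  apply mul_left_cancel₀ hι
  rw [Finset.mul_sum, Finset.sum_congr rfl fun i _ => hdiag i, Finset.sum_const,
    Finset.card_univ, nsmul_eq_mul]

theorem exists_forall_mulVec_eq_self_of_sum_ne_zero (ρ : G →* Matrix ι ι R)
    (hρ : ∑ g, ρ g ≠ 0) : ∃ v ≠ 0, ∀ g, ρ g *ᵥ v = v := by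
  obtain ⟨w, hw⟩ : ∃ w, (∑ g, ρ g) *ᵥ w ≠ 0 := by
    by_contra! H
    exact hρ (ext_iff_mulVec.mpr fun w => by rw [H, zero_mulVec])
  refine ⟨_, hw, fun h => ?_⟩
  rw [mulVec_mulVec, Finset.mul_sum]
  simp only [← map_mul]
  rw [(Group.mulLeft_bijective h).sum_comp ρ]

end Averaging

theorem exists_forall_mulVec_eq_smul_of_commute {K α : Type*} [Field K] [IsAlgClosed K]
    (ρ : α → Matrix (Fin 2) (Fin 2) K) {A : Matrix (Fin 2) (Fin 2) K}
    (hA : A ∉ Set.range (scalar (Fin 2))) (hcomm : ∀ a, Commute (ρ a) A) :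
    ∃ v ≠ 0, ∀ a, ∃ c : K, ρ a *ᵥ v = c • v := by
  obtain ⟨μ, hμ⟩ := Module.End.exists_eigenvalue (toLinAlgEquiv' A)
  set E := Module.End.eigenspace (toLinAlgEquiv' A) μ
  have hE : Module.finrank K E = 1 := by
    have hpos : 0 < Module.finrank K E :=
      Nat.pos_of_ne_zero fun h => hμ (Submodule.finrank_eq_zero.mp h)
    have hle : Module.finrank K E ≤ 2 := by simpa using Submodule.finrank_le E
    have hne : Module.finrank K E ≠ 2 := by
      intro h2
      have htop : E = ⊤ := Submodule.eq_top_of_finrank_eq (by simpa using h2)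
      refine hA ⟨μ, ext_iff_mulVec.mpr fun v => ?_⟩
      have hv : v ∈ E := htop ▸ Submodule.mem_top
      rw [Module.End.mem_eigenspace_iff, toLinAlgEquiv'_apply] at hv
      simp [hv, scalar_apply]
    omega
  obtain ⟨v, hv⟩ := hμ.exists_hasEigenvector
  refine ⟨v, hv.2, fun a => ?_⟩
  have hmem : toLinAlgEquiv' (ρ a) v ∈ E :=
    Module.End.mapsTo_genEigenspace_of_comm ((hcomm a).symm.map toLinAlgEquiv') μ 1 hv.1
  obtain ⟨c, hc⟩ :=
    exists_smul_eq_of_finrank_eq_one hE (x := ⟨v, hv.1⟩) (by simpa using hv.2) ⟨_, hmem⟩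
  exact ⟨c, by simpa [Subtype.ext_iff] using hc.symm⟩

namespace SpecialLinearGroup

variable {R K : Type*} [CommRing R] [Field K]

lemma trace_inv_fin_two (g : SL(2, R)) :
    trace (↑(g⁻¹) : Matrix (Fin 2) (Fin 2) R) = trace (g : Matrix (Fin 2) (Fin 2) R) := by
  simp [coe_inv, adjugate_fin_two, trace_fin_two, add_comm]

lemma trace_sq_fin_two (g : SL(2, R)) :
    trace (↑(g ^ 2) : Matrix (Fin 2) (Fin 2) R) = trace (g : Matrix (Fin 2) (Fin 2) R) ^ 2 - 2 := by
  have hdet := g.det_coe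
  rw [det_fin_two] at hdet
  simp [sq, trace_fin_two, mul_apply, Fin.sum_univ_two]
  linear_combination -2 * hdet

theorem eq_one_of_mulVec_eq_self [CharZero K] {g : SL(2, K)} {v : Fin 2 → K} (hv : v ≠ 0)
    (hgv : (g : Matrix (Fin 2) (Fin 2) K) *ᵥ v = v) {n : ℕ} (hn : n ≠ 0) (hgn : g ^ n = 1) :
    g = 1 := by
  set N := (g : Matrix (Fin 2) (Fin 2) K) - 1
  have hdetN : N.det = 0 := exists_mulVec_eq_zero_iff.mp ⟨v, hv, by simp [N, sub_mulVec, hgv]⟩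
  have hN : N * N = 0 := by
    have hdet := g.det_coe
    rw [det_fin_two] at hdet hdetN
    simp only [N, sub_apply, one_apply_eq, one_apply_ne zero_ne_one, one_apply_ne one_ne_zero,
      sub_zero] at hdetN
    have htr : g 0 0 + g 1 1 = 2 := by linear_combination hdet - hdetN
    ext i j
    fin_cases i <;> fin_cases j <;> simp [N, mul_apply, Fin.sum_univ_two, one_apply]
    · linear_combination g 0 0 * htr - hdet
    · linear_combination g 0 1 * htr
    · linear_combination g 1 0 * htr
    · linear_combination g 1 1 * htr - hdet
  have hnN : (n : K) • N = 0 := by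
    have h := congrArg (fun g : SL(2, K) => (g : Matrix (Fin 2) (Fin 2) K)) hgn
    simp only [coe_pow, coe_one] at h
    rwa [← add_sub_cancel (1 : Matrix (Fin 2) (Fin 2) K) (g : Matrix (Fin 2) (Fin 2) K),
      one_add_pow_of_mul_self_eq_zero hN, add_eq_left, ← Nat.cast_smul_eq_nsmul K] at h
  refine Subtype.ext ?_
  simpa [N, sub_eq_zero, hn] using hnN

theorem sum_trace_mul_trace_inv_of_odd {G : Type*} [Group G] [Fintype G] (ρ : G →* SL(2, R))
    (hodd : Odd (Nat.card G)) :
    ∑ g, trace (ρ g : Matrix (Fin 2) (Fin 2) R) * trace (ρ g⁻¹ : Matrix (Fin 2) (Fin 2) R) =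
      ∑ g, trace (ρ g : Matrix (Fin 2) (Fin 2) R) + 2 * Fintype.card G := by
  calc ∑ g, trace (ρ g : Matrix (Fin 2) (Fin 2) R) * trace (ρ g⁻¹ : Matrix (Fin 2) (Fin 2) R)
      = ∑ g, (trace (ρ (g ^ 2) : Matrix (Fin 2) (Fin 2) R) + 2) := by
        refine Finset.sum_congr rfl fun g _ => ?_
        rw [map_inv, trace_inv_fin_two, map_pow, trace_sq_fin_two]
        ring
    _ = ∑ g, trace (ρ g : Matrix (Fin 2) (Fin 2) R) + 2 * Fintype.card G := by
        have hsq : ∑ g, trace (ρ (g ^ 2) : Matrix (Fin 2) (Fin 2) R) =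
            ∑ g, trace (ρ g : Matrix (Fin 2) (Fin 2) R) :=
          Fintype.sum_equiv (powCoprime hodd.coprime_two_right) _ _ fun _ => rfl
        rw [Finset.sum_add_distrib, hsq, Finset.sum_const, Finset.card_univ, nsmul_eq_mul,
          mul_comm]

theorem isCyclic_of_forall_mulVec_eq_smul [CharZero K] (G : Subgroup SL(2, K)) [Finite G]
    {v : Fin 2 → K} (hv : v ≠ 0)
    (hG : ∀ g : G, ∃ c : K, ((g : SL(2, K)) : Matrix (Fin 2) (Fin 2) K) *ᵥ v = c • v) :
    IsCyclic G := by
  choose c hc using hG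
  have hc_mul (g h : G) : c (g * h) = c g * c h := by
    refine smul_left_injective K hv ?_
    calc c (g * h) • v = ((g * h : G) : Matrix (Fin 2) (Fin 2) K) *ᵥ v := (hc _).symm
      _ = (g : Matrix (Fin 2) (Fin 2) K) *ᵥ ((h : Matrix (Fin 2) (Fin 2) K) *ᵥ v) := by
        rw [Subgroup.coe_mul, coe_mul, mulVec_mulVec]
      _ = (c g * c h) • v := by rw [hc h, mulVec_smul, hc g, smul_smul, mul_comm]
  have hc_one : c 1 = 1 := by
    refine smul_left_injective K hv ?_
    simpa using (hc 1).symm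
  let χ : G →* K := { toFun := c, map_one' := hc_one, map_mul' := hc_mul }
  refine isCyclic_of_injective_ringHom χ ((injective_iff_map_eq_one χ).mpr fun g hg => ?_)
  have hfix : ((g : SL(2, K)) : Matrix (Fin 2) (Fin 2) K) *ᵥ v = v := by
    rw [hc, show c g = 1 from hg, one_smul]
  have hgn : (g : SL(2, K)) ^ Nat.card G = 1 := by
    rw [← Subgroup.coe_pow, pow_card_eq_one', Subgroup.coe_one]
  exact Subtype.ext (eq_one_of_mulVec_eq_self hv hfix Nat.card_pos.ne' hgn)

end SpecialLinearGroup

end Matrix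

/-- Every finite subgroup of `SL(2,ℂ)` of odd order is cyclic. -/
theorem stmt_19 (G : Subgroup (Matrix.SpecialLinearGroup (Fin 2) ℂ))
    (hfin : Finite G) (hodd : Odd (Nat.card G)) : IsCyclic G := by
  have := Fintype.ofFinite G
  let ρ : G →* Matrix (Fin 2) (Fin 2) ℂ := SpecialLinearGroup.coeMonoidHom.comp G.subtype
  obtain ⟨v, hv, hρv⟩ : ∃ v ≠ 0, ∀ g, ∃ c : ℂ, ρ g *ᵥ v = c • v := by
    by_cases hsum : ∑ g, ρ g = 0
    · have htrace : ∑ g, trace (ρ g) * trace (ρ g⁻¹) = 2 * Fintype.card G := by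
        have h : ∑ g, trace (ρ g) * trace (ρ g⁻¹) = trace (∑ g, ρ g) + 2 * Fintype.card G := by
          rw [trace_sum]
          exact SpecialLinearGroup.sum_trace_mul_trace_inv_of_odd G.subtype hodd
        rwa [hsum, trace_zero, zero_add] at h
      obtain ⟨A, hcomm, hA⟩ : ∃ A, (∀ g, Commute (ρ g) A) ∧ A ∉ Set.range (scalar (Fin 2)) := by
        by_contra! h
        have hcard := sum_trace_mul_trace_inv_eq_card ρ (by norm_num) h
        rw [htrace] at hcard
        have hzero : (Fintype.card G : ℂ) = 0 := by linear_combination hcard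
        exact Fintype.card_ne_zero (by exact_mod_cast hzero)
      exact exists_forall_mulVec_eq_smul_of_commute ρ hA hcomm
    · obtain ⟨v, hv, hfix⟩ := exists_forall_mulVec_eq_self_of_sum_ne_zero ρ hsum
      exact ⟨v, hv, fun g => ⟨1, by rw [hfix, one_smul]⟩⟩
  exact SpecialLinearGroup.isCyclic_of_forall_mulVec_eq_smul G hv hρv
end
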